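/- arXiv:1509.07231 — 5 statements merged into one kernel-verified Lean document; each statement's English description precedes it below -/
import Mathlib

section
/- Let ω ∈ ℱ¹(ℙⁿ,e) belong to the class 𝒰. (i) If K(ω) and 𝒞(dω) are comaximal, i.e., K(ω) + 𝒞(dω) = S, then I(ω) + L(ω) = S and I(ω) ∩ L(ω) = J(ω); consequently there is an isomorphism of graded S-modules I(ω)/J(ω) ≅ S/L(ω) induced by the inclusion I(ω) ⊆ S. (ii) If instead 𝔪 ⊆ √(K(ω) + 𝒞(dω)) (i.e., the Kupka scheme is disjoint from the projective zero locus of 𝒞(dω)), then the Hilbert polynomials of I(ω)/J(ω) and of S/L(ω) coincide; equivalently, for all sufficiently large degrees d, dim_ℂ (I(ω)/J(ω))_d = dim_ℂ (S/L(ω))_d. -/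
open MvPolynomial

noncomputable section

abbrev PolyS (n : ℕ) := MvPolynomial (Fin (n+1)) ℂ

/-- The coefficient of `dω` at `dx_i ∧ dx_j`, where `ω` is the 1-form `Σ ω i dx_i`. -/
def dcoeff {n : ℕ} (ω : Fin (n+1) → PolyS n) (i j : Fin (n+1)) : PolyS n :=
  pderiv i (ω j) - pderiv j (ω i)

/-- Integrability `ω ∧ dω = 0`, written in coordinates. -/
def Integrable {n : ℕ} (ω : Fin (n+1) → PolyS n) : Prop :=
  ∀ i j k, ω i * dcoeff ω j k - ω j * dcoeff ω i k + ω k * dcoeff ω i j = 0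

/-- The singular ideal `J(ω)`, generated by the coefficients of `ω`. -/
def Jideal {n : ℕ} (ω : Fin (n+1) → PolyS n) : Ideal (PolyS n) :=
  Ideal.span (Set.range ω)

/-- The ideal `𝒞(dω)` of coefficients of `dω`. -/
def Cdiff {n : ℕ} (ω : Fin (n+1) → PolyS n) : Ideal (PolyS n) :=
  Ideal.span {g | ∃ i j, g = dcoeff ω i j}

/-- The unfoldings ideal `I(ω) = {h : h·dω = ω ∧ η for some 1-form η}`. -/
def Iideal {n : ℕ} (ω : Fin (n+1) → PolyS n) : Ideal (PolyS n) where
  carrier := {h | ∃ η : Fin (n+1) → PolyS n,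
    ∀ i j, h * dcoeff ω i j = ω i * η j - ω j * η i}
  add_mem' := by
    rintro a b ⟨η, hη⟩ ⟨ξ, hξ⟩
    exact ⟨η + ξ, fun i j => by
      simp only [Pi.add_apply]
      linear_combination hη i j + hξ i j⟩
  zero_mem' := ⟨0, fun i j => by simp⟩
  smul_mem' := by
    rintro c a ⟨η, hη⟩
    exact ⟨c • η, fun i j => by
      simp only [smul_eq_mul, Pi.smul_apply]
      linear_combination c * hη i j⟩

/-- The Kupka ideal `K(ω) = (J(ω) : 𝒞(dω))`. -/
def Kideal {n : ℕ} (ω : Fin (n+1) → PolyS n) : Ideal (PolyS n) :=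
  (Jideal ω).colon (Cdiff ω)

/-- The non-Kupka ideal `L(ω) = (J(ω) : K(ω)^∞)`. -/
def Lideal {n : ℕ} (ω : Fin (n+1) → PolyS n) : Ideal (PolyS n) :=
  ⨆ d : ℕ, (Jideal ω).colon (((Kideal ω) ^ (d+1) : Ideal (PolyS n)) : Set (PolyS n))

/-- The irrelevant ideal `(x_0, …, x_n)`. -/
def irrelevant (n : ℕ) : Ideal (PolyS n) := Ideal.span (Set.range X)

/-- `height I ≥ k` : every prime containing `I` has height at least `k`. -/
def heightGE {n : ℕ} (I : Ideal (PolyS n)) (k : ℕ) : Prop :=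
  ∀ p : PrimeSpectrum (PolyS n), I ≤ p.asIdeal → (k : ℕ∞) ≤ Order.height p

/-- `ω ∈ ℱ¹(ℙⁿ, e)` : a foliation one-form of degree `e` on `ℙⁿ`. -/
def IsFoliation (n e : ℕ) (ω : Fin (n+1) → PolyS n) : Prop :=
  ω ≠ 0 ∧ 2 ≤ e ∧ (∀ i, (ω i).IsHomogeneous (e-1)) ∧ Integrable ω ∧
  (∑ i, X i * ω i = 0) ∧ heightGE (Jideal ω) 2

/-- A homogeneous ideal: stable under taking homogeneous components. -/
def IsHomogIdeal {n : ℕ} (p : Ideal (PolyS n)) : Prop :=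
  ∀ h ∈ p, ∀ d : ℕ, homogeneousComponent d h ∈ p

/-- A relevant prime: a homogeneous prime different from the irrelevant ideal. -/
def IsRelevantPrime {n : ℕ} (p : Ideal (PolyS n)) : Prop :=
  p.IsPrime ∧ IsHomogIdeal p ∧ p ≠ irrelevant n

/-- A relevant prime `p` is a division point of `ω` iff `I(ω) ⊄ p`. -/
def DivisionPoint {n : ℕ} (ω : Fin (n+1) → PolyS n) (p : Ideal (PolyS n)) : Prop :=
  ¬ (Iideal ω ≤ p)

/-- The class `𝒰`. -/
def InU {n : ℕ} (ω : Fin (n+1) → PolyS n) : Prop :=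
  ∀ p : Ideal (PolyS n), IsRelevantPrime p → ¬ (Kideal ω ≤ p) → DivisionPoint ω p

/-- The degree-`d` homogeneous component of an ideal `A ⊆ S`, as a `ℂ`-subspace of `S`. -/
def homogComp {n : ℕ} (A : Ideal (PolyS n)) (d : ℕ) : Submodule ℂ (PolyS n) :=
  (Submodule.restrictScalars ℂ A) ⊓ (homogeneousSubmodule (Fin (n+1)) ℂ d)

/-!
Everything in sight is homogeneous, and a homogeneous ideal of `S` is either `S` or contained
in `𝔪`. So in (i) comaximality of `K(ω)` and `𝒞(dω)` means that one of them is `S`. If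
`K(ω) = S` then `𝒞(dω) ⊆ J(ω)`; as the coefficients of `dω` have degree `e - 2` while `J(ω)` is
generated in degree `e - 1`, this forces `dω = 0`, so `I(ω) = S` and `L(ω) = J(ω)`. If
`𝒞(dω) = S` then `L(ω) = S`, and `I(ω) = J(ω)` because `I(ω) · 𝒞(dω) ⊆ J(ω)`. In both cases
`I(ω) → S/L(ω)` is onto with kernel `J(ω)`.

In (ii), a relevant prime containing `I(ω) + L(ω)` contains `K(ω)` because `ω ∈ 𝒰`, and it
contains `𝒞(dω) ⊆ L(ω)`, hence it contains `𝔪`; thus `𝔪 ⊆ √(I(ω) + L(ω))`. The ideal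
`(J(ω) : I(ω) ∩ L(ω))` contains `𝒞(dω)` and, since `L(ω) = (J(ω) : K(ω)^m)` for some `m` by
noetherianity, a power of `K(ω)`, so its radical contains `𝔪` as well. In large degrees `d`
this gives `I_d + L_d = S_d` and `(I ∩ L)_d = J_d`, and the claim is the dimension formula
for the sum of two subspaces.
-/

attribute [local instance] MvPolynomial.gradedAlgebra

namespace MvPolynomial

variable {σ R : Type*} [CommSemiring R]

theorem coe_decompose_homogeneousSubmodule (p : MvPolynomial σ R) (i : ℕ) :
    (DirectSum.decompose (homogeneousSubmodule σ R) p i : MvPolynomial σ R) =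
      homogeneousComponent i p :=
  decomposition.decompose'_apply p i

theorem homogeneousComponent_mul_of_isHomogeneous {k : ℕ} {b : MvPolynomial σ R}
    (hb : b.IsHomogeneous k) (r : MvPolynomial σ R) (d : ℕ) :
    homogeneousComponent d (r * b) = if k ≤ d then homogeneousComponent (d - k) r * b else 0 := by
  simp only [← coe_decompose_homogeneousSubmodule]
  exact DirectSum.coe_decompose_mul_of_right_mem _ d hb

theorem ideal_isHomogeneous_iff {I : Ideal (MvPolynomial σ R)} :
    I.IsHomogeneous (homogeneousSubmodule σ R) ↔ ∀ p ∈ I, ∀ i, homogeneousComponent i p ∈ I := by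
  refine ⟨fun h p hp i => homogeneousComponent_mem_of_mem h hp i, fun h i p hp => ?_⟩
  rw [coe_decompose_homogeneousSubmodule]
  exact h p hp i

theorem isHomogeneous_colon {I J : Ideal (MvPolynomial σ R)}
    (hI : I.IsHomogeneous (homogeneousSubmodule σ R))
    (hJ : J.IsHomogeneous (homogeneousSubmodule σ R)) :
    (I.colon (J : Set (MvPolynomial σ R))).IsHomogeneous (homogeneousSubmodule σ R) := by
  refine ideal_isHomogeneous_iff.mpr fun f hf d => Submodule.mem_colon.mpr fun p hp => ?_
  rw [← sum_homogeneousComponent p, Finset.smul_sum]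
  refine Ideal.sum_mem _ fun k _ => ?_
  have hfk : f * homogeneousComponent k p ∈ I :=
    Submodule.mem_colon.mp hf _ (homogeneousComponent_mem_of_mem hJ hp k)
  have := homogeneousComponent_mem_of_mem hI hfk (d + k)
  rwa [homogeneousComponent_mul_of_isHomogeneous (homogeneousComponent_isHomogeneous k p),
    if_pos (Nat.le_add_left k d), Nat.add_sub_cancel] at this

theorem homogeneousComponent_eq_zero_of_mem_span_range {ι : Type*} [Fintype ι]
    {g : ι → MvPolynomial σ R} {k : ℕ} (hg : ∀ i, (g i).IsHomogeneous k)
    {f : MvPolynomial σ R} (hf : f ∈ Ideal.span (Set.range g)) {d : ℕ} (hd : d < k) :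
    homogeneousComponent d f = 0 := by
  obtain ⟨c, rfl⟩ := Ideal.mem_span_range_iff_exists_fun.mp hf
  simp [homogeneousComponent_mul_of_isHomogeneous (hg _), not_le.mpr hd]

theorem IsHomogeneous.mem_pow_idealOfVars {p : MvPolynomial σ R} {d : ℕ}
    (hp : p.IsHomogeneous d) : p ∈ idealOfVars σ R ^ d :=
  (mem_pow_idealOfVars_iff d p).mpr fun _ hx => by
    rw [Finsupp.degree_eq_weight_one]
    exact (hp (mem_support_iff.mp hx)).ge

theorem idealOfVars_ne_top [Nontrivial R] : idealOfVars σ R ≠ ⊤ := by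
  rw [Ideal.ne_top_iff_one, ← pow_one (idealOfVars σ R), ← C_1, C_mem_pow_idealOfVars_iff]
  simp

end MvPolynomial

theorem Ideal.IsHomogeneous.pow {ι σ A : Type*} [CommSemiring A] [DecidableEq ι] [AddMonoid ι]
    [SetLike σ A] [AddSubmonoidClass σ A] {𝒜 : ι → σ} [GradedRing 𝒜] {I : Ideal A}
    (hI : I.IsHomogeneous 𝒜) (k : ℕ) : (I ^ k).IsHomogeneous 𝒜 := by
  induction k with
  | zero => simpa using Ideal.IsHomogeneous.top 𝒜
  | succ k ih => simpa [pow_succ] using ih.mul hI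

section Field

variable {σ K : Type*} [Field K]

theorem Ideal.IsHomogeneous.le_idealOfVars {I : Ideal (MvPolynomial σ K)}
    (hI : I.IsHomogeneous (homogeneousSubmodule σ K)) (hne : I ≠ ⊤) : I ≤ idealOfVars σ K := by
  intro f hf
  have hf0 : coeff 0 f = 0 := by
    by_contra hc
    have := homogeneousComponent_mem_of_mem hI hf 0
    rw [homogeneousComponent_zero] at this
    exact hne (Ideal.eq_top_of_isUnit_mem _ this ((IsUnit.mk0 _ hc).map C))
  rw [idealOfVars, ← Set.image_univ, mem_ideal_span_X_image]
  intro m hm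
  obtain ⟨i, hi⟩ := Finsupp.ne_iff.mp (ne_of_mem_of_not_mem hm (by simpa using hf0))
  exact ⟨i, Set.mem_univ i, hi⟩

theorem Ideal.IsHomogeneous.eq_top_or_eq_top_of_sup_eq_top {I J : Ideal (MvPolynomial σ K)}
    (hI : I.IsHomogeneous (homogeneousSubmodule σ K))
    (hJ : J.IsHomogeneous (homogeneousSubmodule σ K)) (h : I ⊔ J = ⊤) : I = ⊤ ∨ J = ⊤ := by
  by_contra! hne
  exact idealOfVars_ne_top (top_le_iff.mp
    (h ▸ sup_le (hI.le_idealOfVars hne.1) (hJ.le_idealOfVars hne.2)))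

end Field

theorem Ideal.exists_iSup_colon_pow_eq {R : Type*} [CommSemiring R] [IsNoetherianRing R]
    (J K : Ideal R) : ∃ m, ⨆ d : ℕ, J.colon ((K ^ (d + 1) : Ideal R) : Set R) =
      J.colon ((K ^ (m + 1) : Ideal R) : Set R) := by
  let f : ℕ →o Ideal R :=
    ⟨fun d => J.colon ((K ^ (d + 1) : Ideal R) : Set R), fun _ _ h =>
      Submodule.colon_mono le_rfl (Ideal.pow_le_pow_right (Nat.succ_le_succ h))⟩
  obtain ⟨m, hm⟩ := monotone_stabilizes_iff_noetherian.mpr inferInstance f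
  refine ⟨m, le_antisymm (iSup_le fun d => ?_) (le_iSup f m)⟩
  rcases le_total d m with h | h
  · exact f.monotone h
  · exact (hm d h).ge

theorem Ideal.exists_quotient_linearEquiv_of_sup_eq_top {R : Type*} [CommRing R]
    {I J L : Ideal R} (hsup : I ⊔ L = ⊤) (hinf : I ⊓ L = J) :
    ∃ f : (I ⧸ Submodule.comap I.subtype (Submodule.restrictScalars R J)) ≃ₗ[R] R ⧸ L,
      ∀ x : I, f (Submodule.Quotient.mk x) = Ideal.Quotient.mk L (x : R) := by
  let φ : I →ₗ[R] R ⧸ L := L.mkQ ∘ₗ I.subtype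
  have hker : Submodule.comap I.subtype (Submodule.restrictScalars R J) = LinearMap.ker φ := by
    ext x
    simp [φ, ← hinf, Ideal.Quotient.eq_zero_iff_mem]
  have hsurj : Function.Surjective φ := by
    rintro ⟨y⟩
    obtain ⟨a, ha, b, hb, rfl⟩ := Submodule.mem_sup.mp (hsup ▸ Submodule.mem_top : y ∈ I ⊔ L)
    refine ⟨⟨a, ha⟩, (Submodule.Quotient.eq L).mpr ?_⟩
    simpa using L.neg_mem hb
  exact ⟨(Submodule.quotEquivOfEq _ _ hker).trans (φ.quotKerEquivOfSurjective hsurj),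
    fun _ => rfl⟩

section HomogComp

variable {n : ℕ}

theorem mem_homogComp {A : Ideal (PolyS n)} {d : ℕ} {x : PolyS n} :
    x ∈ homogComp A d ↔ x ∈ A ∧ x.IsHomogeneous d := by
  simp [homogComp, mem_homogeneousSubmodule]

instance (A : Ideal (PolyS n)) (d : ℕ) : FiniteDimensional ℂ (homogComp A d) :=
  Submodule.finiteDimensional_of_le (S₂ := restrictTotalDegree (Fin (n+1)) ℂ d) fun _ hx =>
    (mem_restrictTotalDegree _ _ _).mpr (mem_homogComp.mp hx).2.totalDegree_le

theorem homogComp_mono {A B : Ideal (PolyS n)} (h : A ≤ B) (d : ℕ) :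
    homogComp A d ≤ homogComp B d :=
  fun _ hx => mem_homogComp.mpr ⟨h (mem_homogComp.mp hx).1, (mem_homogComp.mp hx).2⟩

theorem homogComp_inf (A B : Ideal (PolyS n)) (d : ℕ) :
    homogComp (A ⊓ B) d = homogComp A d ⊓ homogComp B d := by
  ext x
  simp only [Submodule.mem_inf, mem_homogComp]
  tauto

theorem homogComp_sup {A B : Ideal (PolyS n)}
    (hA : A.IsHomogeneous (homogeneousSubmodule (Fin (n+1)) ℂ))
    (hB : B.IsHomogeneous (homogeneousSubmodule (Fin (n+1)) ℂ)) (d : ℕ) :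
    homogComp (A ⊔ B) d = homogComp A d ⊔ homogComp B d := by
  refine le_antisymm (fun x hx => ?_)
    (sup_le (homogComp_mono le_sup_left d) (homogComp_mono le_sup_right d))
  obtain ⟨hx, hxd⟩ := mem_homogComp.mp hx
  obtain ⟨a, ha, b, hb, rfl⟩ := Submodule.mem_sup.mp hx
  rw [← homogeneousComponent_eq_self hxd, map_add]
  exact Submodule.add_mem_sup
    (mem_homogComp.mpr
      ⟨homogeneousComponent_mem_of_mem hA ha d, homogeneousComponent_isHomogeneous d a⟩)
    (mem_homogComp.mpr
      ⟨homogeneousComponent_mem_of_mem hB hb d, homogeneousComponent_isHomogeneous d b⟩)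

theorem eventually_homogComp_top_le {A : Ideal (PolyS n)} (hA : irrelevant n ≤ A.radical) :
    ∃ N, ∀ d, N ≤ d → homogComp ⊤ d ≤ homogComp A d := by
  obtain ⟨N, hN⟩ := Ideal.exists_pow_le_of_le_radical_of_fg hA (idealOfVars_fg _ _)
  refine ⟨N, fun d hd x hx => mem_homogComp.mpr ⟨hN ?_, (mem_homogComp.mp hx).2⟩⟩
  exact Ideal.pow_le_pow_right hd (mem_homogComp.mp hx).2.mem_pow_idealOfVars

theorem homogeneousComponent_mul_mem_of_irrelevant_pow_le_colon {M J : Ideal (PolyS n)}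
    (hM : M.IsHomogeneous (homogeneousSubmodule (Fin (n+1)) ℂ)) {N : ℕ}
    (hN : irrelevant n ^ N ≤ J.colon (M : Set (PolyS n))) (r : PolyS n) {t : PolyS n}
    (ht : t ∈ M) {d : ℕ} (hd : N + t.totalDegree ≤ d) : homogeneousComponent d (r * t) ∈ J := by
  rw [← sum_homogeneousComponent t, Finset.mul_sum, map_sum]
  refine Ideal.sum_mem _ fun i hi => ?_
  rw [homogeneousComponent_mul_of_isHomogeneous (homogeneousComponent_isHomogeneous i t)]
  split_ifs with hid
  · have hi' : i ≤ t.totalDegree := Nat.lt_succ_iff.mp (Finset.mem_range.mp hi)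
    have hr : homogeneousComponent (d - i) r ∈ J.colon (M : Set (PolyS n)) :=
      hN (Ideal.pow_le_pow_right (by omega)
        (homogeneousComponent_isHomogeneous (d - i) r).mem_pow_idealOfVars)
    exact Submodule.mem_colon.mp hr _ (homogeneousComponent_mem_of_mem hM ht i)
  · exact zero_mem J

theorem eventually_homogComp_le {M J : Ideal (PolyS n)}
    (hM : M.IsHomogeneous (homogeneousSubmodule (Fin (n+1)) ℂ))
    (h : irrelevant n ≤ (J.colon (M : Set (PolyS n))).radical) :
    ∃ N, ∀ d, N ≤ d → homogComp M d ≤ homogComp J d := by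
  obtain ⟨N, hN⟩ := Ideal.exists_pow_le_of_le_radical_of_fg h (idealOfVars_fg _ _)
  obtain ⟨T, hT⟩ := (IsNoetherian.noetherian M : M.FG)
  refine ⟨N + T.sup totalDegree, fun d hd x hx => ?_⟩
  obtain ⟨hxM, hxd⟩ := mem_homogComp.mp hx
  refine mem_homogComp.mpr ⟨?_, hxd⟩
  rw [← hT] at hxM
  obtain ⟨f, -, rfl⟩ := Submodule.mem_span_finset.mp hxM
  rw [← homogeneousComponent_eq_self hxd, map_sum]
  refine Ideal.sum_mem _ fun t htT => ?_
  exact homogeneousComponent_mul_mem_of_irrelevant_pow_le_colon hM hN (f t)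
    (hT ▸ Submodule.subset_span htT) (le_trans (by simpa using Finset.le_sup htT) hd)

end HomogComp

section Foliation

variable {n e : ℕ} {ω : Fin (n+1) → PolyS n}

theorem mem_Iideal {h : PolyS n} :
    h ∈ Iideal ω ↔ ∃ η : Fin (n+1) → PolyS n, ∀ i j, h * dcoeff ω i j = ω i * η j - ω j * η i :=
  Iff.rfl

theorem dcoeff_isHomogeneous (hhom : ∀ i, (ω i).IsHomogeneous (e-1)) (i j : Fin (n+1)) :
    (dcoeff ω i j).IsHomogeneous (e-2) :=
  ((hhom j).pderiv (i := i)).sub ((hhom i).pderiv (i := j))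

theorem isHomogeneous_Jideal (hhom : ∀ i, (ω i).IsHomogeneous (e-1)) :
    (Jideal ω).IsHomogeneous (homogeneousSubmodule (Fin (n+1)) ℂ) :=
  Ideal.homogeneous_span _ _ (by rintro _ ⟨i, rfl⟩; exact ⟨e-1, hhom i⟩)

theorem isHomogeneous_Cdiff (hhom : ∀ i, (ω i).IsHomogeneous (e-1)) :
    (Cdiff ω).IsHomogeneous (homogeneousSubmodule (Fin (n+1)) ℂ) :=
  Ideal.homogeneous_span _ _ (by rintro _ ⟨i, j, rfl⟩; exact ⟨e-2, dcoeff_isHomogeneous hhom i j⟩)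

theorem isHomogeneous_Kideal (hhom : ∀ i, (ω i).IsHomogeneous (e-1)) :
    (Kideal ω).IsHomogeneous (homogeneousSubmodule (Fin (n+1)) ℂ) :=
  isHomogeneous_colon (isHomogeneous_Jideal hhom) (isHomogeneous_Cdiff hhom)

theorem isHomogeneous_Lideal (hhom : ∀ i, (ω i).IsHomogeneous (e-1)) :
    (Lideal ω).IsHomogeneous (homogeneousSubmodule (Fin (n+1)) ℂ) :=
  Ideal.IsHomogeneous.iSup fun d =>
    isHomogeneous_colon (isHomogeneous_Jideal hhom) ((isHomogeneous_Kideal hhom).pow (d + 1))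

theorem isHomogeneous_Iideal (hhom : ∀ i, (ω i).IsHomogeneous (e-1)) :
    (Iideal ω).IsHomogeneous (homogeneousSubmodule (Fin (n+1)) ℂ) := by
  refine ideal_isHomogeneous_iff.mpr fun h hh d => ?_
  obtain ⟨η, hη⟩ := mem_Iideal.mp hh
  set c := d + (e - 2)
  have hcomp : ∀ i r, homogeneousComponent c (r * ω i) =
      (if e - 1 ≤ c then homogeneousComponent (c - (e - 1)) r else 0) * ω i := fun i r => by
    rw [homogeneousComponent_mul_of_isHomogeneous (hhom i), ite_mul, zero_mul]
  refine mem_Iideal.mpr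
    ⟨fun j => if e - 1 ≤ c then homogeneousComponent (c - (e - 1)) (η j) else 0, fun i j => ?_⟩
  have := congrArg (homogeneousComponent c) (hη i j)
  rw [homogeneousComponent_mul_of_isHomogeneous (dcoeff_isHomogeneous hhom i j),
    if_pos (Nat.le_add_left _ _), Nat.add_sub_cancel, map_sub, mul_comm (ω i), mul_comm (ω j),
    hcomp, hcomp] at this
  linear_combination this

theorem Jideal_le_Iideal (hint : Integrable ω) : Jideal ω ≤ Iideal ω := by
  refine Ideal.span_le.mpr ?_
  rintro _ ⟨k, rfl⟩
  refine mem_Iideal.mpr ⟨fun j => dcoeff ω k j, fun i j => ?_⟩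
  have := hint i j k
  simp only [dcoeff] at this ⊢
  linear_combination this

theorem Cdiff_le_colon_Iideal : Cdiff ω ≤ (Jideal ω).colon (Iideal ω : Set (PolyS n)) := by
  refine Ideal.span_le.mpr ?_
  rintro _ ⟨i, j, rfl⟩
  refine Submodule.mem_colon.mpr fun h hh => ?_
  obtain ⟨η, hη⟩ := mem_Iideal.mp hh
  rw [smul_eq_mul, mul_comm, hη i j]
  exact sub_mem (Ideal.mul_mem_right _ _ (Ideal.subset_span ⟨i, rfl⟩))
    (Ideal.mul_mem_right _ _ (Ideal.subset_span ⟨j, rfl⟩))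

theorem colon_pow_le_Lideal (d : ℕ) :
    (Jideal ω).colon ((Kideal ω ^ (d + 1) : Ideal (PolyS n)) : Set (PolyS n)) ≤ Lideal ω :=
  le_iSup (fun d => (Jideal ω).colon ((Kideal ω ^ (d + 1) : Ideal (PolyS n)) : Set (PolyS n))) d

theorem Jideal_le_Lideal : Jideal ω ≤ Lideal ω :=
  Ideal.le_colon.trans (colon_pow_le_Lideal 0)

theorem Cdiff_le_Lideal : Cdiff ω ≤ Lideal ω := by
  refine le_trans (fun c hc => Submodule.mem_colon.mpr fun k hk => ?_) (colon_pow_le_Lideal 0)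
  rw [zero_add, pow_one] at hk
  rw [smul_eq_mul, mul_comm]
  exact Submodule.mem_colon.mp hk c hc

theorem exists_pow_Kideal_le_colon_Lideal :
    ∃ m, Kideal ω ^ (m + 1) ≤ (Jideal ω).colon (Lideal ω : Set (PolyS n)) := by
  obtain ⟨m, hm⟩ := Ideal.exists_iSup_colon_pow_eq (Jideal ω) (Kideal ω)
  refine ⟨m, fun k hk => Submodule.mem_colon.mpr fun l hl => ?_⟩
  rw [Lideal, hm] at hl
  rw [smul_eq_mul, mul_comm]
  exact Submodule.mem_colon.mp hl k hk

theorem dcoeff_eq_zero_of_Cdiff_le_Jideal (he : 2 ≤ e) (hhom : ∀ i, (ω i).IsHomogeneous (e-1))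
    (hCJ : Cdiff ω ≤ Jideal ω) (i j : Fin (n+1)) : dcoeff ω i j = 0 := by
  rw [← homogeneousComponent_eq_self (dcoeff_isHomogeneous hhom i j)]
  exact homogeneousComponent_eq_zero_of_mem_span_range hhom (hCJ (Ideal.subset_span ⟨i, j, rfl⟩))
    (by omega)

theorem Iideal_eq_top_of_Kideal_eq_top (he : 2 ≤ e) (hhom : ∀ i, (ω i).IsHomogeneous (e-1))
    (hK : Kideal ω = ⊤) : Iideal ω = ⊤ := by
  have hCJ : Cdiff ω ≤ Jideal ω := (Submodule.colon_eq_top_iff_subset _).mp hK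
  refine (Ideal.eq_top_iff_one _).mpr (mem_Iideal.mpr ⟨0, fun i j => ?_⟩)
  simp [dcoeff_eq_zero_of_Cdiff_le_Jideal he hhom hCJ i j]

theorem Lideal_eq_Jideal_of_Kideal_eq_top (hK : Kideal ω = ⊤) : Lideal ω = Jideal ω := by
  simp [Lideal, hK, Ideal.top_pow]

theorem Iideal_eq_Jideal_of_Cdiff_eq_top (hint : Integrable ω) (hC : Cdiff ω = ⊤) :
    Iideal ω = Jideal ω := by
  refine le_antisymm (fun h hh => ?_) (Jideal_le_Iideal hint)
  have h1 : (1 : PolyS n) ∈ (Jideal ω).colon (Iideal ω : Set (PolyS n)) :=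
    Cdiff_le_colon_Iideal (hC ▸ Submodule.mem_top)
  simpa using Submodule.mem_colon.mp h1 h hh

theorem Lideal_eq_top_of_Cdiff_eq_top (hC : Cdiff ω = ⊤) : Lideal ω = ⊤ :=
  top_le_iff.mp (hC ▸ Cdiff_le_Lideal)

theorem Iideal_sup_Lideal_eq_top_and_inf_eq_Jideal (he : 2 ≤ e)
    (hhom : ∀ i, (ω i).IsHomogeneous (e-1)) (hint : Integrable ω)
    (hKC : Kideal ω ⊔ Cdiff ω = ⊤) :
    Iideal ω ⊔ Lideal ω = ⊤ ∧ Iideal ω ⊓ Lideal ω = Jideal ω := by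
  rcases (isHomogeneous_Kideal hhom).eq_top_or_eq_top_of_sup_eq_top
    (isHomogeneous_Cdiff hhom) hKC with hK | hC
  · simp [Iideal_eq_top_of_Kideal_eq_top he hhom hK, Lideal_eq_Jideal_of_Kideal_eq_top hK]
  · simp [Iideal_eq_Jideal_of_Cdiff_eq_top hint hC, Lideal_eq_top_of_Cdiff_eq_top hC]

theorem irrelevant_le_radical_of_forall_isRelevantPrime {A : Ideal (PolyS n)}
    (hA : A.IsHomogeneous (homogeneousSubmodule (Fin (n+1)) ℂ))
    (h : ∀ P, IsRelevantPrime P → A ≤ P → irrelevant n ≤ P) : irrelevant n ≤ A.radical := by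
  rw [hA.radical_eq]
  refine le_sInf ?_
  rintro P ⟨hPh, hAP, hP⟩
  by_cases hPm : P = irrelevant n
  · exact hPm.ge
  · exact h P ⟨hP, ideal_isHomogeneous_iff.mp hPh, hPm⟩ hAP

theorem irrelevant_le_radical_Iideal_sup_Lideal (hhom : ∀ i, (ω i).IsHomogeneous (e-1))
    (hU : InU ω) (hrad : irrelevant n ≤ (Kideal ω ⊔ Cdiff ω).radical) :
    irrelevant n ≤ (Iideal ω ⊔ Lideal ω).radical := by
  refine irrelevant_le_radical_of_forall_isRelevantPrime
    ((isHomogeneous_Iideal hhom).sup (isHomogeneous_Lideal hhom)) fun P hP hle => ?_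
  have hKP : Kideal ω ≤ P := by
    by_contra hKP
    exact hU P hP hKP (le_sup_left.trans hle)
  calc irrelevant n ≤ (Kideal ω ⊔ Cdiff ω).radical := hrad
    _ ≤ P.radical :=
      Ideal.radical_mono (sup_le hKP (Cdiff_le_Lideal.trans (le_sup_right.trans hle)))
    _ = P := hP.1.radical

theorem irrelevant_le_radical_colon_Iideal_inf_Lideal
    (hrad : irrelevant n ≤ (Kideal ω ⊔ Cdiff ω).radical) :
    irrelevant n ≤
      ((Jideal ω).colon ((Iideal ω ⊓ Lideal ω : Ideal (PolyS n)) : Set (PolyS n))).radical := by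
  obtain ⟨m, hm⟩ := exists_pow_Kideal_le_colon_Lideal (ω := ω)
  have hle : Kideal ω ^ (m + 1) ⊔ Cdiff ω ≤
      (Jideal ω).colon ((Iideal ω ⊓ Lideal ω : Ideal (PolyS n)) : Set (PolyS n)) :=
    sup_le (hm.trans (Submodule.colon_mono le_rfl inf_le_right))
      (Cdiff_le_colon_Iideal.trans (Submodule.colon_mono le_rfl inf_le_left))
  calc irrelevant n ≤ (Kideal ω ⊔ Cdiff ω).radical := hrad
    _ = (Kideal ω ^ (m + 1) ⊔ Cdiff ω).radical := by
      rw [Ideal.radical_sup, Ideal.radical_sup (Kideal ω ^ (m + 1)),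
        Ideal.radical_pow _ (Nat.succ_ne_zero m)]
    _ ≤ _ := Ideal.radical_mono hle

end Foliation

/-- Let `ω ∈ 𝒰 ⊆ ℱ¹(ℙⁿ,e)`.
(i) If `K(ω) + 𝒞(dω) = S` then `I(ω) + L(ω) = S` and `I(ω) ∩ L(ω) = J(ω)`, and the
inclusion `I(ω) ⊆ S` induces an isomorphism of (graded) `S`-modules `I(ω)/J(ω) ≅ S/L(ω)`.
(ii) If `𝔪 ⊆ √(K(ω) + 𝒞(dω))`, then for all large degrees `d` the dimensions of the
degree-`d` components of `I(ω)/J(ω)` and `S/L(ω)` coincide, i.e.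
`dim I(ω)_d - dim J(ω)_d = dim S_d - dim L(ω)_d` (stated additively). -/
theorem stmt6 (n e : ℕ) (ω : Fin (n+1) → PolyS n) (hfol : IsFoliation n e ω)
    (hU : InU ω) :
    ((Kideal ω + Cdiff ω = ⊤) →
      (Iideal ω + Lideal ω = ⊤) ∧ (Iideal ω ⊓ Lideal ω = Jideal ω) ∧
      ∃ f : (↥(Iideal ω) ⧸
          (Submodule.comap (Iideal ω).subtype
            (Submodule.restrictScalars (PolyS n) (Jideal ω)))) ≃ₗ[PolyS n]
          (PolyS n ⧸ Lideal ω),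
        ∀ x : ↥(Iideal ω),
          f (Submodule.Quotient.mk x) = Ideal.Quotient.mk (Lideal ω) (x : PolyS n)) ∧
    ((irrelevant n ≤ (Kideal ω + Cdiff ω).radical) →
      ∃ N : ℕ, ∀ d : ℕ, N ≤ d →
        Module.finrank ℂ ↥(homogComp (Iideal ω) d) +
          Module.finrank ℂ ↥(homogComp (Lideal ω) d) =
        Module.finrank ℂ ↥(homogComp (⊤ : Ideal (PolyS n)) d) +
          Module.finrank ℂ ↥(homogComp (Jideal ω) d)) := by
  obtain ⟨-, he, hhom, hint, -, -⟩ := hfol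
  refine ⟨fun hKC => ?_, fun hrad => ?_⟩
  · obtain ⟨hsup, hinf⟩ := Iideal_sup_Lideal_eq_top_and_inf_eq_Jideal he hhom hint hKC
    exact ⟨hsup, hinf, Ideal.exists_quotient_linearEquiv_of_sup_eq_top hsup hinf⟩
  · have hI := isHomogeneous_Iideal hhom
    have hL := isHomogeneous_Lideal hhom
    obtain ⟨N₁, h₁⟩ := eventually_homogComp_top_le
      (irrelevant_le_radical_Iideal_sup_Lideal hhom hU hrad)
    obtain ⟨N₂, h₂⟩ := eventually_homogComp_le (hI.inf hL)
      (irrelevant_le_radical_colon_Iideal_inf_Lideal hrad)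
    refine ⟨max N₁ N₂, fun d hd => ?_⟩
    have hsup : homogComp (Iideal ω) d ⊔ homogComp (Lideal ω) d = homogComp ⊤ d := by
      rw [← homogComp_sup hI hL]
      exact le_antisymm (homogComp_mono le_top d) (h₁ d (le_of_max_le_left hd))
    have hinf : homogComp (Iideal ω) d ⊓ homogComp (Lideal ω) d = homogComp (Jideal ω) d := by
      rw [← homogComp_inf]
      exact le_antisymm (h₂ d (le_of_max_le_right hd))
        (homogComp_mono (le_inf (Jideal_le_Iideal hint) Jideal_le_Lideal) d)
    rw [← Submodule.finrank_sup_add_finrank_inf_eq, hsup, hinf]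

end
end

section
/- Let ω ∈ ℱ¹(ℙⁿ,e) and let a ≥ 1 be an integer. Consider the ℂ-vector space V_a := {(h,η) : h ∈ S homogeneous of degree a, η ∈ Ω¹_S with all coefficients homogeneous of degree a−1, and a·h·dω = e·ω ∧ (η − dh)}, and its subspace W_a := {(0, f·ω) : f ∈ S homogeneous of degree a−e}. Then the projection (h,η) ↦ h induces a well-defined ℂ-linear isomorphism from V_a / W_a onto the degree-a homogeneous component I(ω)_a of the unfoldings ideal I(ω). -/
/-!
The projection `(h, η) ↦ h` lands in `I(ω)`, since `(e/a)(η - dh)` witnesses the membership of `h`.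
It is onto `I(ω)_a`: a witness `ξ` of `h ∈ I(ω)`, cut down to its degree `a - 1` component, gives
`(h, (a/e) ξ + dh) ∈ V_a`. Its kernel consists of the pairs `(0, η)` with `ω ∧ η = 0`. As `J(ω)` has
height `≥ 2`, Krull's principal ideal theorem shows that the coefficients of `ω` have no common
factor in the UFD `S`, so `η = f ω`, and comparing degrees makes `f` homogeneous of degree `a - e`.
-/

open MvPolynomial

noncomputable section

/-- The space `V_a` of graded unfolding data of degree `a`:
pairs `(h, η)` with `h` homogeneous of degree `a`, the coefficients of `η` homogeneous
of degree `a-1`, and `a·h·dω = e·ω ∧ (η − dh)`. -/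
def Vsub {n : ℕ} (ω : Fin (n+1) → PolyS n) (e a : ℕ) :
    Submodule ℂ (PolyS n × (Fin (n+1) → PolyS n)) where
  carrier := {p | p.1.IsHomogeneous a ∧ (∀ i, (p.2 i).IsHomogeneous (a-1)) ∧
    ∀ i j, (a : PolyS n) * p.1 * dcoeff ω i j =
      (e : PolyS n) * (ω i * (p.2 j - pderiv j p.1) - ω j * (p.2 i - pderiv i p.1))}
  add_mem' := by
    rintro ⟨h₁, η₁⟩ ⟨h₂, η₂⟩ ⟨hh₁, hη₁, heq₁⟩ ⟨hh₂, hη₂, heq₂⟩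
    refine ⟨hh₁.add hh₂, fun i => (hη₁ i).add (hη₂ i), fun i j => ?_⟩
    simp only [Prod.fst_add, Prod.snd_add, Pi.add_apply, map_add]
    linear_combination heq₁ i j + heq₂ i j
  zero_mem' := by
    refine ⟨isHomogeneous_zero _ _ _, fun i => isHomogeneous_zero _ _ _, fun i j => by simp⟩
  smul_mem' := by
    rintro c ⟨h, η⟩ ⟨hh, hη, heq⟩
    refine ⟨?_, fun i => ?_, fun i j => ?_⟩
    · exact (mem_homogeneousSubmodule _ _).1
        ((homogeneousSubmodule (Fin (n+1)) ℂ a).smul_mem c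
          ((mem_homogeneousSubmodule _ _).2 hh))
    · exact (mem_homogeneousSubmodule _ _).1
        ((homogeneousSubmodule (Fin (n+1)) ℂ (a-1)).smul_mem c
          ((mem_homogeneousSubmodule _ _).2 (hη i)))
    · simp only [Prod.smul_fst, Prod.smul_snd, Pi.smul_apply, map_smul]
      simp only [MvPolynomial.smul_eq_C_mul, pderiv_C_mul]
      linear_combination (C c : PolyS n) * heq i j

/-- The subspace `W_a = {(0, f·ω) : f homogeneous of degree a-e}` (with `f = 0` forced
when `a < e`, since then there is no nonzero homogeneous polynomial of degree `a-e`). -/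
def Wsub {n : ℕ} (ω : Fin (n+1) → PolyS n) (e a : ℕ) :
    Submodule ℂ (PolyS n × (Fin (n+1) → PolyS n)) where
  carrier := {p | ∃ f : PolyS n, p = (0, f • ω) ∧
    ((e ≤ a ∧ f.IsHomogeneous (a - e)) ∨ f = 0)}
  add_mem' := by
    rintro p q ⟨f, rfl, hf⟩ ⟨g, rfl, hg⟩
    refine ⟨f + g, by rw [Prod.mk_add_mk, add_zero, add_smul], ?_⟩
    rcases hf with ⟨hea, hf⟩ | rfl
    · rcases hg with ⟨-, hg⟩ | rfl
      · exact Or.inl ⟨hea, hf.add hg⟩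
      · simpa using Or.inl ⟨hea, hf⟩
    · simpa using hg
  zero_mem' := ⟨0, by simp; rfl, Or.inr rfl⟩
  smul_mem' := by
    rintro c p ⟨f, rfl, hf⟩
    refine ⟨c • f, by rw [Prod.smul_mk, smul_zero, smul_assoc], ?_⟩
    rcases hf with ⟨hea, hf⟩ | rfl
    · exact Or.inl ⟨hea, (mem_homogeneousSubmodule _ _).1
        ((homogeneousSubmodule (Fin (n+1)) ℂ (a-e)).smul_mem c
          ((mem_homogeneousSubmodule _ _).2 hf))⟩
    · exact Or.inr (by simp)


namespace MvPolynomial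

variable {σ R : Type*} [CommSemiring R]

attribute [local instance] MvPolynomial.gradedAlgebra in
theorem homogeneousComponent_mul_of_isHomogeneous_left {p : MvPolynomial σ R} {m : ℕ}
    (hp : p.IsHomogeneous m) (q : MvPolynomial σ R) (d : ℕ) :
    homogeneousComponent (m + d) (p * q) = p * homogeneousComponent d q := by
  rw [← decomposition.decompose'_apply, ← decomposition.decompose'_apply]
  exact DirectSum.coe_decompose_mul_add_of_left_mem (homogeneousSubmodule σ R) hp

theorem isHomogeneous_of_forall_homogeneousComponent_eq_zero {φ : MvPolynomial σ R} {n : ℕ}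
    (h : ∀ d ≠ n, homogeneousComponent d φ = 0) : φ.IsHomogeneous n := by
  intro c hc
  by_contra hne
  apply hc
  have := congrArg (coeff c) (h _ hne)
  rwa [homogeneousComponent, coeff_weightedHomogeneousComponent, if_pos rfl] at this

theorem IsHomogeneous.of_mul_left [NoZeroDivisors R] {f g : MvPolynomial σ R} {m k : ℕ}
    (hg : g.IsHomogeneous m) (hg0 : g ≠ 0) (hgf : (g * f).IsHomogeneous k) (hf0 : f ≠ 0) :
    m ≤ k ∧ f.IsHomogeneous (k - m) := by
  have hcomp : ∀ d, m + d ≠ k → homogeneousComponent d f = 0 := fun d hd => by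
    have := homogeneousComponent_mul_of_isHomogeneous_left hg f d
    rw [homogeneousComponent_of_mem hgf, if_neg hd] at this
    exact (mul_eq_zero.mp this.symm).resolve_left hg0
  have hf : f.IsHomogeneous (k - m) :=
    isHomogeneous_of_forall_homogeneousComponent_eq_zero fun d hd => hcomp d (by omega)
  have := (hg.mul hf).inj_right hgf (mul_ne_zero hg0 hf0)
  exact ⟨by omega, hf⟩

end MvPolynomial

theorem isUnit_of_forall_dvd_of_two_le_height {R ι : Type*} [CommRing R] [IsNoetherianRing R]
    {v : ι → R} (hv : ∀ p : PrimeSpectrum R, Ideal.span (Set.range v) ≤ p.asIdeal →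
      2 ≤ Order.height p)
    {q : R} (hq : ∀ i, q ∣ v i) : IsUnit q := by
  by_contra hq0
  obtain ⟨p, hp⟩ := (Ideal.span {q}).nonempty_minimalPrimes (by simpa using hq0)
  have hpp := hp.isPrime
  have hle : Ideal.span (Set.range v) ≤ p := by
    refine le_trans ?_ hp.1.2
    rw [Ideal.span_le]
    rintro _ ⟨i, rfl⟩
    exact Ideal.mem_span_singleton.mpr (hq i)
  have h2 := hv ⟨p, hpp⟩ hle
  rw [← PrimeSpectrum.height_eq_orderHeight] at h2
  have h1 := Ideal.height_le_one_of_isPrincipal_of_mem_minimalPrimes _ p hp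
  exact absurd (h2.trans h1) (by decide)

theorem exists_eq_mul_of_mul_comm {R ι : Type*} [CommRing R] [IsDomain R]
    [UniqueFactorizationMonoid R] {ω η : ι → R} (hω : ∀ q, (∀ i, q ∣ ω i) → IsUnit q)
    (hcomm : ∀ i j, η i * ω j = η j * ω i) : ∃ f, ∀ i, η i = f * ω i := by
  obtain ⟨j, hj⟩ : ∃ j, ω j ≠ 0 := by
    by_contra! h
    exact not_isUnit_zero (hω 0 fun i => by simp [h i])
  obtain ⟨q, p, c, hqp, hcq, hcp⟩ := UniqueFactorizationMonoid.exists_reduced_factors (ω j) hj (η j)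
  have hc : c ≠ 0 := left_ne_zero_of_mul (hcq ▸ hj)
  have hcross : ∀ i, q * η i = p * ω i := fun i =>
    mul_left_cancel₀ hc (by linear_combination hcomm i j - ω i * hcp + η i * hcq)
  obtain ⟨u, rfl⟩ : IsUnit q :=
    hω q fun i => hqp.dvd_of_dvd_mul_left ⟨η i, (hcross i).symm⟩
  exact ⟨↑u⁻¹ * p, fun i => by rw [mul_assoc, ← hcross, Units.inv_mul_cancel_left]⟩

section Unfoldings

variable {n e a m : ℕ} {ω : Fin (n+1) → PolyS n}

theorem isHomogeneous_dcoeff (hω : ∀ i, (ω i).IsHomogeneous m) (i j : Fin (n+1)) :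
    (dcoeff ω i j).IsHomogeneous (m - 1) :=
  (hω j).pderiv.sub (hω i).pderiv

theorem exists_isHomogeneous_of_mem_Iideal (hω : ∀ i, (ω i).IsHomogeneous m) (hm : 1 ≤ m)
    {h : PolyS n} (hh : h.IsHomogeneous a) (ha : a ≠ 0) (hI : h ∈ Iideal ω) :
    ∃ ξ : Fin (n+1) → PolyS n, (∀ i, (ξ i).IsHomogeneous (a - 1)) ∧
      ∀ i j, h * dcoeff ω i j = ω i * ξ j - ω j * ξ i := by
  obtain ⟨ξ, hξ⟩ := hI
  refine ⟨fun i => homogeneousComponent (a - 1) (ξ i),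
    fun i => homogeneousComponent_isHomogeneous _ _, fun i j => ?_⟩
  have hdeg : (h * dcoeff ω i j).IsHomogeneous (m + (a - 1)) := by
    convert hh.mul (isHomogeneous_dcoeff hω i j) using 1
    omega
  simpa only [map_sub, homogeneousComponent_eq_self hdeg,
    homogeneousComponent_mul_of_isHomogeneous_left (hω _)] using
    congrArg (homogeneousComponent (m + (a - 1))) (hξ i j)

theorem fst_mem_Iideal_of_mem_Vsub (ha : a ≠ 0) {v : PolyS n × (Fin (n+1) → PolyS n)}
    (hv : v ∈ Vsub ω e a) : v.1 ∈ Iideal ω := by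
  obtain ⟨-, -, hv⟩ := hv
  have hinv : C (a : ℂ)⁻¹ * (a : PolyS n) = 1 := by
    rw [← map_natCast C, ← map_mul, inv_mul_cancel₀ (Nat.cast_ne_zero.mpr ha), map_one]
  refine ⟨fun i => C ((a : ℂ)⁻¹ * e) * (v.2 i - pderiv i v.1), fun i j => ?_⟩
  simp only [map_mul, map_natCast]
  linear_combination C (a : ℂ)⁻¹ * hv i j - v.1 * dcoeff ω i j * hinv

theorem exists_mem_Vsub_of_mem_homogComp (he : 2 ≤ e) (hω : ∀ i, (ω i).IsHomogeneous (e - 1))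
    (ha : a ≠ 0) {h : PolyS n} (hh : h ∈ homogComp (Iideal ω) a) :
    ∃ η : Fin (n+1) → PolyS n, (h, η) ∈ Vsub ω e a := by
  obtain ⟨hI, hhom⟩ := Submodule.mem_inf.mp hh
  obtain ⟨ξ, hξhom, hξ⟩ := exists_isHomogeneous_of_mem_Iideal hω (by omega) hhom ha hI
  have hinv : (e : PolyS n) * C ((a : ℂ) / e) = (a : PolyS n) := by
    rw [← map_natCast C, ← map_mul, mul_div_cancel₀ _ (by norm_cast; omega), map_natCast]
  refine ⟨fun i => C ((a : ℂ) / e) * ξ i + pderiv i h,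
    ⟨hhom, fun i => ((hξhom i).C_mul _).add hhom.pderiv, fun i j => ?_⟩⟩
  linear_combination (a : PolyS n) * hξ i j - (ω i * ξ j - ω j * ξ i) * hinv

theorem mem_Wsub_of_mem_Vsub_of_fst_eq_zero (he : 1 ≤ e)
    (hω : ∀ i, (ω i).IsHomogeneous (e - 1)) (hJ : heightGE (Jideal ω) 2) (ha : a ≠ 0)
    {v : PolyS n × (Fin (n+1) → PolyS n)} (hv : v ∈ Vsub ω e a) (h0 : v.1 = 0) :
    v ∈ Wsub ω e a := by
  obtain ⟨h, η⟩ := v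
  obtain rfl : h = 0 := h0
  obtain ⟨-, hηhom, hv⟩ := hv
  have hcomm : ∀ i j, η i * ω j = η j * ω i := fun i j => by
    have : (e : PolyS n) * (ω i * η j - ω j * η i) = 0 := by simpa using (hv i j).symm
    linear_combination -(mul_eq_zero.mp this).resolve_left (by norm_cast; omega)
  obtain ⟨f, hf⟩ := exists_eq_mul_of_mul_comm
    (fun _ => isUnit_of_forall_dvd_of_two_le_height fun p hp => by exact_mod_cast hJ p hp) hcomm
  obtain rfl : η = f • ω := funext hf
  by_cases hfω : f • ω = 0
  · exact ⟨0, by rw [hfω, zero_smul], Or.inr rfl⟩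
  obtain ⟨j, hj⟩ := Function.ne_iff.mp hfω
  simp only [Pi.smul_apply, smul_eq_mul, Pi.zero_apply] at hj
  obtain ⟨hle, hfhom⟩ := (hω j).of_mul_left (right_ne_zero_of_mul hj)
    (by rw [mul_comm]; exact hηhom j) (left_ne_zero_of_mul hj)
  exact ⟨f, rfl, Or.inl ⟨by omega, by convert hfhom using 1; omega⟩⟩

def VsubFst (ω : Fin (n+1) → PolyS n) (e : ℕ) (ha : a ≠ 0) :
    Vsub ω e a →ₗ[ℂ] homogComp (Iideal ω) a :=
  ((LinearMap.fst ℂ _ _).comp (Vsub ω e a).subtype).codRestrict _ fun v =>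
    ⟨fst_mem_Iideal_of_mem_Vsub ha v.2, v.2.1⟩

theorem ker_VsubFst (he : 1 ≤ e) (hω : ∀ i, (ω i).IsHomogeneous (e - 1))
    (hJ : heightGE (Jideal ω) 2) (ha : a ≠ 0) :
    LinearMap.ker (VsubFst ω e ha) = (Wsub ω e a).comap (Vsub ω e a).subtype := by
  ext v
  refine ⟨fun hv => ?_, fun ⟨f, hv, _⟩ => Subtype.ext (congrArg Prod.fst hv)⟩
  exact mem_Wsub_of_mem_Vsub_of_fst_eq_zero he hω hJ ha v.2
    (congrArg Subtype.val (LinearMap.mem_ker.mp hv))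

theorem VsubFst_surjective (he : 2 ≤ e) (hω : ∀ i, (ω i).IsHomogeneous (e - 1)) (ha : a ≠ 0) :
    Function.Surjective (VsubFst ω e ha) := fun h => by
  obtain ⟨η, hη⟩ := exists_mem_Vsub_of_mem_homogComp he hω ha h.2
  exact ⟨⟨_, hη⟩, rfl⟩

end Unfoldings

/-- For `ω ∈ ℱ¹(ℙⁿ,e)` and `a ≥ 1`, the projection `(h,η) ↦ h` induces a
`ℂ`-linear isomorphism `V_a / W_a ≅ I(ω)_a`, the degree-`a` homogeneous component of the
unfoldings ideal. -/
theorem stmt8 (n e a : ℕ) (ω : Fin (n+1) → PolyS n) (hfol : IsFoliation n e ω)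
    (ha : 1 ≤ a) :
    ∃ f : (↥(Vsub ω e a) ⧸ (Wsub ω e a).comap (Vsub ω e a).subtype) ≃ₗ[ℂ]
        ↥(homogComp (Iideal ω) a),
      ∀ v : ↥(Vsub ω e a),
        (f (Submodule.Quotient.mk v) : PolyS n) = (v : PolyS n × (Fin (n+1) → PolyS n)).1 := by
  obtain ⟨-, he, hω, -, -, hJ⟩ := hfol
  have ha₀ : a ≠ 0 := by omega
  exact ⟨(Submodule.quotEquivOfEq _ _ (ker_VsubFst (by omega) hω hJ ha₀).symm).trans
    ((VsubFst ω e ha₀).quotKerEquivOfSurjective (VsubFst_surjective he hω ha₀)), fun _ => rfl⟩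

end
end

section
/- Let ω ∈ ℱ¹(ℙⁿ,e). Then 1 ∉ I(ω); that is, there is no 1-form η ∈ Ω¹_S with dω = ω ∧ η. Equivalently, the class of dω in the second Koszul homology H²(ω) := ker(ω∧ : Ω²_S → Ω³_S)/(ω ∧ Ω¹_S) is nonzero, and the unfoldings ideal I(ω) is a proper ideal of S. -/
open MvPolynomial

noncomputable section

/-!
Contract everything with the radial vector field `R = ∑ xᵢ ∂ᵢ`. Since `i_R ω = 0` and the
coefficients of `ω` are homogeneous of degree `d`, Euler's identity gives `i_R dω = (d + 1) ω`.
If `dω = ω ∧ η`, then `i_R dω = (i_R ω) η - (i_R η) ω = -(i_R η) ω`, so `(d + 1 + i_R η) ω = 0`.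
As `ω ≠ 0`, the polynomial `d + 1 + i_R η` vanishes, which is impossible since `i_R η` has no
constant term.
-/

section Radial

variable {R σ : Type*} [CommRing R] [Fintype σ]

theorem sum_X_mul_pderiv_of_sum_X_mul_eq_zero [DecidableEq σ] {ω : σ → MvPolynomial σ R}
    (hω : ∑ i, X i * ω i = 0) (j : σ) : ∑ i, X i * pderiv j (ω i) = -ω j := by
  have h := congrArg (pderiv j) hω
  simp only [map_sum, Derivation.leibniz, pderiv_X, smul_eq_mul, map_zero] at h
  simp only [Pi.single_apply, mul_ite, mul_one, mul_zero, Finset.sum_add_distrib,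
    Finset.sum_ite_eq', Finset.mem_univ, if_true] at h
  linear_combination h

theorem sum_X_mul_wedge_of_sum_X_mul_eq_zero {ω : σ → MvPolynomial σ R}
    (hω : ∑ i, X i * ω i = 0) (η : σ → MvPolynomial σ R) (j : σ) :
    ∑ i, X i * (ω i * η j - ω j * η i) = -((∑ i, X i * η i) * ω j) := by
  calc ∑ i, X i * (ω i * η j - ω j * η i)
      = (∑ i, X i * ω i) * η j - (∑ i, X i * η i) * ω j := by
        simp only [Finset.sum_mul, ← Finset.sum_sub_distrib]
        exact Finset.sum_congr rfl fun i _ => by ring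
    _ = -((∑ i, X i * η i) * ω j) := by rw [hω]; ring

end Radial

theorem sum_X_mul_dcoeff {n d : ℕ} {ω : Fin (n+1) → PolyS n}
    (hhom : ∀ i, (ω i).IsHomogeneous d) (hω : ∑ i, X i * ω i = 0) (j : Fin (n+1)) :
    ∑ i, X i * dcoeff ω i j = (d + 1) • ω j := by
  simp only [dcoeff, mul_sub, Finset.sum_sub_distrib, (hhom j).sum_X_mul_pderiv,
    sum_X_mul_pderiv_of_sum_X_mul_eq_zero hω j]
  rw [succ_nsmul, sub_neg_eq_add]

theorem not_exists_dcoeff_eq_wedge {n d : ℕ} {ω : Fin (n+1) → PolyS n} (hω0 : ω ≠ 0)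
    (hhom : ∀ i, (ω i).IsHomogeneous d) (hω : ∑ i, X i * ω i = 0) :
    ¬ ∃ η : Fin (n+1) → PolyS n, ∀ i j, dcoeff ω i j = ω i * η j - ω j * η i := by
  rintro ⟨η, hη⟩
  obtain ⟨j, hj⟩ : ∃ j, ω j ≠ 0 := Function.ne_iff.mp hω0
  set g := ∑ i, X i * η i
  have hcontract : (d + 1) • ω j = -(g * ω j) := by
    rw [← sum_X_mul_dcoeff hhom hω j, ← sum_X_mul_wedge_of_sum_X_mul_eq_zero hω η j]
    simp only [hη]
  have hzero : C ((d + 1 : ℕ) : ℂ) + g = 0 := by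
    refine (mul_eq_zero.mp ?_).resolve_right hj
    rw [add_mul, ← smul_eq_C_mul, Nat.cast_smul_eq_nsmul, hcontract, neg_add_cancel]
  have hconst := congrArg constantCoeff hzero
  simp only [g, map_add, constantCoeff_C, map_sum, map_mul, constantCoeff_X, zero_mul,
    Finset.sum_const_zero, add_zero, map_zero] at hconst
  exact d.succ_ne_zero (by exact_mod_cast hconst)

theorem one_mem_Iideal_iff {n : ℕ} {ω : Fin (n+1) → PolyS n} :
    (1 : PolyS n) ∈ Iideal ω ↔
      ∃ η : Fin (n+1) → PolyS n, ∀ i j, dcoeff ω i j = ω i * η j - ω j * η i := by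
  simp only [Iideal, Submodule.mem_mk, AddSubmonoid.mem_mk, AddSubsemigroup.mem_mk,
    Set.mem_ofPred_eq, one_mul]

/-- For `ω ∈ ℱ¹(ℙⁿ,e)`, `1 ∉ I(ω)`: there is no 1-form `η` with
`dω = ω ∧ η`; equivalently the class of `dω` in `H²(ω)` is nonzero and `I(ω)` is proper. -/
theorem stmt10 (n e : ℕ) (ω : Fin (n+1) → PolyS n) (hfol : IsFoliation n e ω) :
    (1 : PolyS n) ∉ Iideal ω ∧
    (¬ ∃ η : Fin (n+1) → PolyS n, ∀ i j, dcoeff ω i j = ω i * η j - ω j * η i) ∧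
    Iideal ω ≠ ⊤ := by
  obtain ⟨hω0, -, hhom, -, hω, -⟩ := hfol
  have hno := not_exists_dcoeff_eq_wedge hω0 hhom hω
  have hone : (1 : PolyS n) ∉ Iideal ω := one_mem_Iideal_iff.not.mpr hno
  exact ⟨hone, hno, (Ideal.ne_top_iff_one _).mpr hone⟩

end
end

section
/- Let ω ∈ ℱ¹(ℙⁿ,e) and let p ∈ ℂ^{n+1}. Suppose there exist formal power series f, g ∈ ℂ[[t₀,…,tₙ]] with f(0) ≠ 0 (so f is a unit) such that, after the substitution xᵢ ↦ pᵢ + tᵢ, one has ω = f·dg as formal 1-forms, i.e., Aᵢ(p₀+t₀,…,pₙ+tₙ) = f·(∂g/∂tᵢ) in ℂ[[t₀,…,tₙ]] for every i. Then p is a division point of ω: there exist h ∈ S with h(p) ≠ 0 and η ∈ Ω¹_S such that h·dω = ω ∧ η; equivalently, 1 ∈ I(ω)·S_{𝔪_p}, where 𝔪_p is the maximal ideal of polynomials vanishing at p. -/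
open MvPolynomial

noncomputable section

/-- The formal partial derivative `∂f/∂tᵢ` of a multivariate formal power series. -/
def psDeriv {n : ℕ} (i : Fin (n+1)) (f : MvPowerSeries (Fin (n+1)) ℂ) :
    MvPowerSeries (Fin (n+1)) ℂ :=
  fun m => ((m i : ℂ) + 1) * MvPowerSeries.coeff (R := ℂ) (m + Finsupp.single i 1) f

/-- Substitution `xᵢ ↦ pᵢ + tᵢ` from polynomials into formal power series centered at `p`. -/
def substAt {n : ℕ} (p : Fin (n+1) → ℂ) : PolyS n →+* MvPowerSeries (Fin (n+1)) ℂ :=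
  (MvPolynomial.aeval fun i => MvPowerSeries.C (σ := Fin (n+1)) (R := ℂ) (p i) + MvPowerSeries.X i).toRingHom


/-!
Formally at `p`, `ω = f dg` with `f` a unit gives `dω = df ∧ dg = ω ∧ θ` for `θ = -df / f`.
Truncating `θ` in degrees `< k` and translating back to `S` yields a polynomial 1-form `η_k` with
`dω - ω ∧ η_k` having all coefficients in `𝔪_p ^ k`. So the class of `dω` in the finitely generated
`S`-module `S^{(n+1)²} / (ω ∧ Ω¹_S)` lies in `⋂ₖ 𝔪_p ^ k • ⊤`, and Krull's intersection theorem
provides `a ∈ 𝔪_p` with `(1 - a) dω ∈ ω ∧ Ω¹_S`; then `h = 1 - a` does not vanish at `p`.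
-/

namespace MvPowerSeries

variable {σ : Type*}

theorem pderiv_pderiv_comm {R : Type*} [CommSemiring R] (i j : σ) (f : MvPowerSeries σ R) :
    pderiv R i (pderiv R j f) = pderiv R j (pderiv R i f) := by
  ext m
  rcases eq_or_ne i j with rfl | hij
  · rfl
  simp only [coeff_pderiv, Finsupp.add_apply, Finsupp.single_eq_of_ne hij,
    Finsupp.single_eq_of_ne hij.symm, add_zero, add_right_comm m (Finsupp.single i 1)]
  ring

theorem pderiv_mul_pderiv_sub_pderiv_mul_pderiv {K : Type*} [Field K] {f : MvPowerSeries σ K}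
    (hf : constantCoeff f ≠ 0) (g : MvPowerSeries σ K) (i j : σ) :
    pderiv K i (f * pderiv K j g) - pderiv K j (f * pderiv K i g) =
      f * pderiv K i g * (-pderiv K j f * f⁻¹) -
        f * pderiv K j g * (-pderiv K i f * f⁻¹) := by
  have hinv : f * f⁻¹ = 1 := MvPowerSeries.mul_inv_cancel f hf
  simp only [Derivation.leibniz, smul_eq_mul, pderiv_pderiv_comm i j g]
  linear_combination (pderiv K i g * pderiv K j f - pderiv K j g * pderiv K i f) * hinv

theorem le_order_mul_sub_truncTotal [Finite σ] {R : Type*} [CommRing R]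
    (u φ : MvPowerSeries σ R) (k : ℕ) : (k : ℕ∞) ≤ (u * (φ - truncTotal k φ)).order :=
  (nat_le_order fun d hd => by simp [coeff_truncTotal _ hd]).trans (le_add_self.trans le_order_mul)

end MvPowerSeries

namespace MvPolynomial

variable {σ R : Type*} [CommRing R]

def translation (p : σ → R) : MvPolynomial σ R ≃ₐ[R] MvPolynomial σ R :=
  AlgEquiv.ofAlgHom (aeval fun i => X i + C (p i)) (aeval fun i => X i - C (p i))
    (algHom_ext fun i => by simp) (algHom_ext fun i => by simp)

theorem translation_X (p : σ → R) (i : σ) : translation p (X i) = X i + C (p i) := by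
  simp [translation]

theorem translation_C (p : σ → R) (r : R) : translation p (C r) = C r := by
  simp [translation]

theorem pderiv_translation (p : σ → R) (i : σ) (q : MvPolynomial σ R) :
    pderiv i (translation p q) = translation p (pderiv i q) := by
  induction q using MvPolynomial.induction_on with
  | C r => simp [translation_C]
  | add q r hq hr => simp [hq, hr]
  | mul_X q j hq =>
    rcases eq_or_ne i j with rfl | hij
    · simp [Derivation.leibniz, hq, translation_X]
    · simp [Derivation.leibniz, hq, translation_X, pderiv_X_of_ne hij.symm]

def idealAt (p : σ → R) : Ideal (MvPolynomial σ R) :=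
  (idealOfVars σ R).comap (translation p)

theorem mem_idealAt_pow_iff {p : σ → R} {k : ℕ} {q : MvPolynomial σ R} :
    q ∈ idealAt p ^ k ↔ (k : ℕ∞) ≤ (translation p q : MvPowerSeries σ R).order := by
  have hmap : idealAt p = (idealOfVars σ R).map (translation p).symm :=
    (Ideal.map_symm (translation p).toRingEquiv).symm
  have hmem : q ∈ idealAt p ^ k ↔ translation p q ∈ idealOfVars σ R ^ k := by
    rw [hmap, ← Ideal.map_pow, Ideal.mem_map_of_equiv]
    exact ⟨by rintro ⟨x, hx, rfl⟩; simpa using hx, fun h => ⟨_, h, by simp⟩⟩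
  rw [hmem, mem_pow_idealOfVars_iff']
  refine ⟨fun h => MvPowerSeries.nat_le_order fun d hd => by simpa using h d hd,
    fun h d hd => by
      simpa using MvPowerSeries.coeff_of_lt_order ((Nat.cast_lt.2 hd).trans_le h)⟩

theorem eval_eq_zero_of_mem_idealAt {p : σ → R} {a : MvPolynomial σ R} (ha : a ∈ idealAt p) :
    eval p a = 0 := by
  have heval :
      (constantCoeff : MvPolynomial σ R →+* R).comp (translation p : _ →+* _) = eval p :=
    ringHom_ext (by simp [translation_C]) (by simp [translation_X])
  rw [← heval]
  exact (mem_pow_idealOfVars_iff' 1 _).1 (by simpa using Ideal.mem_comap.1 ha) 0 (by simp)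

end MvPolynomial

section

variable {R : Type*} [CommRing R]

def wedgeLeft {ι : Type*} (ω : ι → R) : (ι → R) →ₗ[R] ι → ι → R where
  toFun η i j := ω i * η j - ω j * η i
  map_add' _ _ := by ext; simp only [Pi.add_apply]; ring
  map_smul' _ _ := by ext; simp only [Pi.smul_apply, smul_eq_mul, RingHom.id_apply]; ring

theorem Submodule.pi_mem_smul_top {ι : Type*} [Finite ι] {M : ι → Type*}
    [∀ i, AddCommGroup (M i)] [∀ i, Module R (M i)] (I : Ideal R) {v : ∀ i, M i}
    (hv : ∀ i, v i ∈ I • (⊤ : Submodule R (M i))) : v ∈ I • (⊤ : Submodule R (∀ i, M i)) := by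
  classical
  have := Fintype.ofFinite ι
  rw [← Finset.univ_sum_single v]
  exact Submodule.sum_mem _ fun i _ =>
    Submodule.smul_top_le_comap_smul_top I (LinearMap.single R M i) (hv i)

theorem Submodule.exists_one_sub_smul_mem_of_forall_mem_sup_pow_smul_top [IsNoetherianRing R]
    {M : Type*} [AddCommGroup M] [Module R M] [Module.Finite R M] (I : Ideal R)
    (N : Submodule R M) {x : M} (hx : ∀ k : ℕ, x ∈ N ⊔ I ^ k • ⊤) :
    ∃ a ∈ I, (1 - a) • x ∈ N := by
  have hx' : N.mkQ x ∈ (⨅ k : ℕ, I ^ k • ⊤ : Submodule R (M ⧸ N)) := by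
    refine Submodule.mem_iInf _ |>.2 fun k => ?_
    have hmap : (N ⊔ I ^ k • ⊤).map N.mkQ = I ^ k • ⊤ := by
      rw [Submodule.map_sup, N.mkQ_map_self, bot_sup_eq, Submodule.map_smul'', Submodule.map_top,
        N.range_mkQ]
    exact hmap ▸ Submodule.mem_map_of_mem (hx k)
  obtain ⟨⟨a, ha⟩, hax⟩ := (I.mem_iInf_smul_pow_eq_bot_iff _).1 hx'
  refine ⟨a, ha, ?_⟩
  rw [← Submodule.Quotient.mk_eq_zero, Submodule.Quotient.mk_smul, sub_smul, one_smul]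
  exact sub_eq_zero.2 hax.symm

end

theorem psDeriv_eq_pderiv {n : ℕ} (i : Fin (n+1)) (f : MvPowerSeries (Fin (n+1)) ℂ) :
    psDeriv i f = MvPowerSeries.pderiv ℂ i f := by
  ext m
  exact mul_comm _ _

theorem substAt_eq_coe_translation {n : ℕ} (p : Fin (n+1) → ℂ) (q : PolyS n) :
    substAt p q = (translation p q : MvPowerSeries (Fin (n+1)) ℂ) := by
  have : substAt p = coeToMvPowerSeries.ringHom.comp (translation p : PolyS n →+* PolyS n) :=
    ringHom_ext (by simp [substAt, translation_C, MvPowerSeries.c_eq_algebraMap])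
      (by simp [substAt, translation_X, add_comm])
  rw [this]
  rfl

theorem substAt_pderiv {n : ℕ} (p : Fin (n+1) → ℂ) (i : Fin (n+1)) (q : PolyS n) :
    substAt p (pderiv i q) = MvPowerSeries.pderiv ℂ i (substAt p q) := by
  rw [substAt_eq_coe_translation, substAt_eq_coe_translation, MvPowerSeries.pderiv_coe,
    pderiv_translation]

theorem substAt_dcoeff {n : ℕ} {ω : Fin (n+1) → PolyS n} {p : Fin (n+1) → ℂ}
    {f g : MvPowerSeries (Fin (n+1)) ℂ} (hf : MvPowerSeries.constantCoeff f ≠ 0)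
    (hω : ∀ i, substAt p (ω i) = f * psDeriv i g) (i j : Fin (n+1)) :
    substAt p (dcoeff ω i j) =
      substAt p (ω i) * (-MvPowerSeries.pderiv ℂ j f * f⁻¹) -
        substAt p (ω j) * (-MvPowerSeries.pderiv ℂ i f * f⁻¹) := by
  simp only [dcoeff, map_sub, substAt_pderiv, hω, psDeriv_eq_pderiv]
  exact MvPowerSeries.pderiv_mul_pderiv_sub_pderiv_mul_pderiv hf g i j

theorem dcoeff_mem_range_wedgeLeft_sup_pow_smul_top {n : ℕ} {ω : Fin (n+1) → PolyS n}
    {p : Fin (n+1) → ℂ} {f g : MvPowerSeries (Fin (n+1)) ℂ}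
    (hf : MvPowerSeries.constantCoeff f ≠ 0) (hω : ∀ i, substAt p (ω i) = f * psDeriv i g)
    (k : ℕ) : dcoeff ω ∈ LinearMap.range (wedgeLeft ω) ⊔ idealAt p ^ k • ⊤ := by
  set θ := fun l => -MvPowerSeries.pderiv ℂ l f * f⁻¹
  set η := fun l => (translation p).symm (MvPowerSeries.truncTotal k (θ l))
  refine Submodule.mem_sup.2 ⟨wedgeLeft ω η, LinearMap.mem_range_self _ _, _,
    ?_, add_sub_cancel _ _⟩
  refine Submodule.pi_mem_smul_top _ fun i => Submodule.pi_mem_smul_top _ fun j => ?_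
  have hsubst : substAt p (dcoeff ω i j - wedgeLeft ω η i j) =
      substAt p (ω i) * (θ j - MvPowerSeries.truncTotal k (θ j)) +
        -substAt p (ω j) * (θ i - MvPowerSeries.truncTotal k (θ i)) := by
    simp only [wedgeLeft, LinearMap.coe_mk, AddHom.coe_mk, map_sub, map_mul, substAt_dcoeff hf hω,
      η, substAt_eq_coe_translation p ((translation p).symm _), AlgEquiv.apply_symm_apply]
    ring
  rw [Pi.sub_apply, Pi.sub_apply, smul_eq_mul, Ideal.mul_top, mem_idealAt_pow_iff,
    ← substAt_eq_coe_translation, hsubst]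
  exact le_min (MvPowerSeries.le_order_mul_sub_truncTotal _ _ k)
    (MvPowerSeries.le_order_mul_sub_truncTotal _ _ k) |>.trans (MvPowerSeries.min_order_le_add)

theorem stmt12_general (n : ℕ) (ω : Fin (n+1) → PolyS n)
    (p : Fin (n+1) → ℂ)
    (hfg : ∃ f g : MvPowerSeries (Fin (n+1)) ℂ,
      MvPowerSeries.constantCoeff (σ := Fin (n+1)) (R := ℂ) f ≠ 0 ∧
      ∀ i, substAt p (ω i) = f * psDeriv i g) :
    ∃ h : PolyS n, ∃ η : Fin (n+1) → PolyS n, eval p h ≠ 0 ∧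
      ∀ i j, h * dcoeff ω i j = ω i * η j - ω j * η i := by
  obtain ⟨f, g, hf, hω⟩ := hfg
  obtain ⟨a, ha, η, hη⟩ := Submodule.exists_one_sub_smul_mem_of_forall_mem_sup_pow_smul_top
    (idealAt p) _ (dcoeff_mem_range_wedgeLeft_sup_pow_smul_top hf hω)
  refine ⟨1 - a, η, by simp [eval_eq_zero_of_mem_idealAt ha], fun i j => ?_⟩
  exact (congr_fun₂ hη i j).symm

/-- Let `ω ∈ ℱ¹(ℙⁿ,e)` and `p ∈ ℂ^{n+1}`. If, formally around `p`,
`ω = f·dg` for some formal power series `f, g` with `f(0) ≠ 0`, then `p` is a division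
point of `ω`: there are `h ∈ S` with `h(p) ≠ 0` and a polynomial 1-form `η` with
`h·dω = ω ∧ η`. -/
theorem stmt12 (n e : ℕ) (ω : Fin (n+1) → PolyS n) (hfol : IsFoliation n e ω)
    (p : Fin (n+1) → ℂ)
    (hfg : ∃ f g : MvPowerSeries (Fin (n+1)) ℂ,
      MvPowerSeries.constantCoeff (σ := Fin (n+1)) (R := ℂ) f ≠ 0 ∧
      ∀ i, substAt p (ω i) = f * psDeriv i g) :
    ∃ h : PolyS n, ∃ η : Fin (n+1) → PolyS n, eval p h ≠ 0 ∧
      ∀ i j, h * dcoeff ω i j = ω i * η j - ω j * η i :=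
  stmt12_general n ω p hfg

end
end

section
/- Let ω = Σ_{i=0}^{2} Aᵢ dxᵢ ∈ ℱ¹(ℙ²,e) be a foliation one-form on ℙ² and let F₀, F₁, F₂ ∈ ℂ[x₀,…,xₙ] be homogeneous polynomials of a common degree ν ≥ 1. Define the pullback F*ω := Σ_{i=0}^{2} Aᵢ(F₀,F₁,F₂)·dFᵢ, a 1-form with coefficients in ℂ[x₀,…,xₙ]. Then: (a) F*ω is integrable, i.e., F*ω ∧ d(F*ω) = 0; and (b) for every h ∈ I(ω), the polynomial h(F₀,F₁,F₂) belongs to I(F*ω). In particular, Aᵢ(F₀,F₁,F₂) ∈ I(F*ω) for i = 0,1,2. -/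
/-!
Pulling back along `F` commutes with the exterior derivative and the wedge product; in
coordinates this is the chain rule together with the symmetry of second partial derivatives.
Hence `ω ∧ dω = 0` pulls back to `F*ω ∧ d(F*ω) = 0`, and an identity `h·dω = ω ∧ η` pulls back
to `h(F)·d(F*ω) = F*ω ∧ F*η`. Finally, integrability says precisely that each coefficient `Aᵢ`
of `ω` satisfies `Aᵢ·dω = ω ∧ η` with `ηⱼ = (dω)ᵢⱼ`, so `Aᵢ ∈ I(ω)`.
-/

open MvPolynomial

noncomputable section

/-- The pullback `F*ω = Σᵢ Aᵢ(F)·dFᵢ` of a 1-form `ω = Σ Aᵢ dxᵢ` on `ℙ²` along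
`F = (F₀,F₁,F₂)`, written in coordinates. -/
def pullbackForm {n : ℕ} (ω : Fin (2+1) → PolyS 2) (F : Fin 3 → PolyS n) :
    Fin (n+1) → PolyS n :=
  fun j => ∑ i, (aeval F (ω i)) * pderiv j (F i)

theorem MvPolynomial.pderiv_pderiv_comm {σ R : Type*} [CommSemiring R] (i j : σ)
    (p : MvPolynomial σ R) : pderiv i (pderiv j p) = pderiv j (pderiv i p) := by
  classical
  induction p using MvPolynomial.induction_on with
  | C a => simp
  | add p q hp hq => simp only [map_add, hp, hq]
  | mul_X p k hp =>
    simp only [pderiv_mul, map_add, pderiv_X, hp, Pi.single_apply]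
    split_ifs <;> simp [add_right_comm]

theorem MvPolynomial.pderiv_aeval {σ τ R : Type*} [CommSemiring R] [Fintype σ]
    (F : σ → MvPolynomial τ R) (j : τ) (p : MvPolynomial σ R) :
    pderiv j (aeval F p) = ∑ a, aeval F (pderiv a p) * pderiv j (F a) := by
  classical
  induction p using MvPolynomial.induction_on with
  | C r => simp
  | add p q hp hq => simp only [map_add, hp, hq, add_mul, Finset.sum_add_distrib]
  | mul_X p k hp =>
    simp only [map_mul, aeval_X, pderiv_mul, hp, map_add, pderiv_X, Pi.single_apply, add_mul,
      Finset.sum_add_distrib, Finset.sum_mul]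
    simp [mul_right_comm]

section Pullback

variable {m n : ℕ}

def wedge (ω η : Fin (n+1) → PolyS n) (i j : Fin (n+1)) : PolyS n :=
  ω i * η j - ω j * η i

def wedge₁₂ (ω : Fin (n+1) → PolyS n) (β : Fin (n+1) → Fin (n+1) → PolyS n)
    (i j k : Fin (n+1)) : PolyS n :=
  ω i * β j k - ω j * β i k + ω k * β i j

def pullback (F : Fin (m+1) → PolyS n) (ω : Fin (m+1) → PolyS m) : Fin (n+1) → PolyS n :=
  fun j => ∑ a, aeval F (ω a) * pderiv j (F a)

/- The pullbacks of 2- and 3-forms take the full array of coefficients, with no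
antisymmetry assumed, so that `wedge`, `wedge₁₂` and `dcoeff` can be fed in directly. -/
def pullback₂ (F : Fin (m+1) → PolyS n) (β : Fin (m+1) → Fin (m+1) → PolyS m)
    (j k : Fin (n+1)) : PolyS n :=
  ∑ a, ∑ b, aeval F (β a b) * pderiv j (F a) * pderiv k (F b)

def pullback₃ (F : Fin (m+1) → PolyS n) (γ : Fin (m+1) → Fin (m+1) → Fin (m+1) → PolyS m)
    (i j k : Fin (n+1)) : PolyS n :=
  ∑ a, ∑ b, ∑ c, aeval F (γ a b c) * pderiv i (F a) * pderiv j (F b) * pderiv k (F c)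

theorem pullback₂_smul (F : Fin (m+1) → PolyS n) (h : PolyS m)
    (β : Fin (m+1) → Fin (m+1) → PolyS m) :
    pullback₂ F (h • β) = aeval F h • pullback₂ F β := by
  funext j k
  simp only [pullback₂, Pi.smul_apply, smul_eq_mul, map_mul, Finset.mul_sum, mul_assoc]

theorem pullback₃_zero (F : Fin (m+1) → PolyS n) : pullback₃ F 0 = 0 := by
  funext i j k
  simp [pullback₃]

theorem dcoeff_pullback (F : Fin (m+1) → PolyS n) (ω : Fin (m+1) → PolyS m) :
    dcoeff (pullback F ω) = pullback₂ F (dcoeff ω) := by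
  funext j k
  simp only [dcoeff, pullback, pullback₂, map_sum, pderiv_mul, pderiv_aeval, map_sub, sub_mul,
    Finset.sum_sub_distrib, Finset.sum_add_distrib, Finset.sum_mul, pderiv_pderiv_comm j k,
    add_sub_add_right_eq_sub]
  exact congrArg₂ (· - ·) Finset.sum_comm
    (Finset.sum_congr rfl fun _ _ => Finset.sum_congr rfl fun _ _ => mul_right_comm _ _ _)

theorem wedge_pullback (F : Fin (m+1) → PolyS n) (ω η : Fin (m+1) → PolyS m) :
    wedge (pullback F ω) (pullback F η) = pullback₂ F (wedge ω η) := by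
  funext j k
  simp only [wedge, pullback, pullback₂, Finset.sum_mul_sum, map_sub, map_mul, sub_mul,
    Finset.sum_sub_distrib]
  exact congrArg₂ (· - ·)
    (Finset.sum_congr rfl fun _ _ => Finset.sum_congr rfl fun _ _ => by ring)
    (Finset.sum_comm.trans <|
      Finset.sum_congr rfl fun _ _ => Finset.sum_congr rfl fun _ _ => by ring)

theorem wedge₁₂_pullback (F : Fin (m+1) → PolyS n) (ω : Fin (m+1) → PolyS m)
    (β : Fin (m+1) → Fin (m+1) → PolyS m) :
    wedge₁₂ (pullback F ω) (pullback₂ F β) = pullback₃ F (wedge₁₂ ω β) := by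
  funext i j k
  simp only [wedge₁₂, pullback, pullback₂, pullback₃, Finset.sum_mul_sum]
  simp only [Finset.mul_sum, map_add, map_sub, map_mul, add_mul, sub_mul, Finset.sum_add_distrib,
    Finset.sum_sub_distrib]
  refine congrArg₂ (· + ·) (congrArg₂ (· - ·) ?_ ?_) ?_
  · exact Finset.sum_congr rfl fun _ _ => Finset.sum_congr rfl fun _ _ =>
      Finset.sum_congr rfl fun _ _ => by ring
  · refine Finset.sum_comm.trans <| Finset.sum_congr rfl fun _ _ => Finset.sum_congr rfl fun _ _ =>
      Finset.sum_congr rfl fun _ _ => by ring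
  · refine Finset.sum_comm.trans <| Finset.sum_congr rfl fun _ _ => Finset.sum_comm.trans <|
      Finset.sum_congr rfl fun _ _ => Finset.sum_congr rfl fun _ _ => by ring

theorem integrable_iff_wedge₁₂_dcoeff_eq_zero (ω : Fin (n+1) → PolyS n) :
    Integrable ω ↔ wedge₁₂ ω (dcoeff ω) = 0 := by
  simp only [funext_iff]
  rfl

theorem Integrable.pullback {ω : Fin (m+1) → PolyS m} (hω : Integrable ω)
    (F : Fin (m+1) → PolyS n) : Integrable (pullback F ω) := by
  rw [integrable_iff_wedge₁₂_dcoeff_eq_zero, dcoeff_pullback, wedge₁₂_pullback,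
    (integrable_iff_wedge₁₂_dcoeff_eq_zero ω).1 hω, pullback₃_zero]

theorem mem_iideal_iff {ω : Fin (n+1) → PolyS n} {h : PolyS n} :
    h ∈ Iideal ω ↔ ∃ η, h • dcoeff ω = wedge ω η := by
  simp only [funext_iff]
  rfl

theorem aeval_mem_iideal_pullback (F : Fin (m+1) → PolyS n) {ω : Fin (m+1) → PolyS m}
    {h : PolyS m} (hh : h ∈ Iideal ω) : aeval F h ∈ Iideal (pullback F ω) := by
  obtain ⟨η, hη⟩ := mem_iideal_iff.1 hh
  exact mem_iideal_iff.2 ⟨pullback F η, by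
    rw [dcoeff_pullback, wedge_pullback, ← hη, pullback₂_smul]⟩

theorem Integrable.jideal_le_iideal {ω : Fin (n+1) → PolyS n} (hω : Integrable ω) :
    Jideal ω ≤ Iideal ω :=
  Ideal.span_le.2 <| Set.range_subset_iff.2 fun i => ⟨dcoeff ω i, fun a b => by
    have := hω a b i
    simp only [dcoeff] at this ⊢
    linear_combination this⟩

end Pullback

theorem stmt15_general (n e : ℕ) (ω : Fin (2+1) → PolyS 2) (hfol : IsFoliation 2 e ω)
    (F : Fin 3 → PolyS n) :
    Integrable (pullbackForm ω F) ∧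
    (∀ h ∈ Iideal ω, aeval F h ∈ Iideal (pullbackForm ω F)) ∧
    (∀ i, aeval F (ω i) ∈ Iideal (pullbackForm ω F)) := by
  have hω : Integrable ω := hfol.2.2.2.1
  have hpull : ∀ h ∈ Iideal ω, aeval F h ∈ Iideal (pullbackForm ω F) :=
    fun _ hh => aeval_mem_iideal_pullback F hh
  exact ⟨hω.pullback F, hpull,
    fun i => hpull _ (hω.jideal_le_iideal (Ideal.subset_span ⟨i, rfl⟩))⟩

/-- Let `ω ∈ ℱ¹(ℙ²,e)` and let `F₀,F₁,F₂` be homogeneous of common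
degree `ν ≥ 1`. Then (a) `F*ω` is integrable; (b) for every `h ∈ I(ω)`, one has
`h(F₀,F₁,F₂) ∈ I(F*ω)`; in particular `Aᵢ(F₀,F₁,F₂) ∈ I(F*ω)` for each `i`. -/
theorem stmt15 (n e ν : ℕ) (ω : Fin (2+1) → PolyS 2) (hfol : IsFoliation 2 e ω)
    (F : Fin 3 → PolyS n) (hν : 1 ≤ ν) (hF : ∀ i, (F i).IsHomogeneous ν) :
    Integrable (pullbackForm ω F) ∧
    (∀ h ∈ Iideal ω, aeval F h ∈ Iideal (pullbackForm ω F)) ∧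
    (∀ i, aeval F (ω i) ∈ Iideal (pullbackForm ω F)) :=
  stmt15_general n e ω hfol F

end
end
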